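/- arXiv:math/0509424 — 4 statements merged into one kernel-verified Lean document; each statement's English description precedes it below -/
import Mathlib

section
/- Let n be an odd natural number and d : Fin n → ℕ a function with d i ≤ 2 for all i and ∑ i, d i = n. Suppose that for every ε : Fin n → ZMod 2 with ∑ i, ε i = 0 one has ∑_{i ∈ {j : d j = 1}} ε i = 0 (in ZMod 2). Then d i = 1 for all i. -/
/-- Combinatorial core of Lemma 2.4 (odd case) of Cynk–Hulek: if `n` is odd,
`d : Fin n → ℕ` satisfies `d i ≤ 2` and `∑ d i = n`, and every even-weight vector
`ε ∈ (ℤ/2ℤ)ⁿ` has even coordinate sum over `{j | d j = 1}`, then all `d i = 1`. -/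
theorem odd_middle_cohomology_invariant (n : ℕ) (hodd : Odd n)
    (d : Fin n → ℕ) (hd2 : ∀ i, d i ≤ 2) (hsum : ∑ i, d i = n)
    (h : ∀ ε : Fin n → ZMod 2, ∑ i, ε i = 0 →
      ∑ i ∈ Finset.univ.filter (fun j => d j = 1), ε i = 0) :
    ∀ i, d i = 1 := by
  by_cases hone : ∃ i₀, d i₀ = 1
  · obtain ⟨i₀, hi₀⟩ := hone
    intro k
    by_contra hk
    have hik : i₀ ≠ k := fun e => hk (e ▸ hi₀)
    set ε : Fin n → ZMod 2 :=
      fun j => (if j = i₀ then 1 else 0) + (if j = k then 1 else 0) with hε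
    have hsumε : ∑ i, ε i = 0 := by
      simp only [hε, Finset.sum_add_distrib, Finset.sum_ite_eq',
        Finset.mem_univ, if_true]
      decide
    have := h ε hsumε
    rw [hε] at this
    rw [Finset.sum_add_distrib, Finset.sum_ite_eq', Finset.sum_ite_eq'] at this
    simp only [Finset.mem_filter, Finset.mem_univ, true_and, hi₀, if_true,
      hk, if_false, add_zero] at this
    exact one_ne_zero this
  · exfalso
    push_neg at hone
    have heven : Even (∑ i, d i) := by
      apply Finset.even_sum
      intro i _
      have := hd2 i
      have := hone i
      rw [Nat.even_iff]
      omega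
    rw [hsum] at heven
    exact (Nat.not_even_iff_odd.mpr hodd) heven
end

section
/- Let n ≥ 1, let ζ ∈ ℂ be a primitive third root of unity, let V = (Fin 2 → ℂ) with standard basis vectors e₀, e₁, and let η : V →ₗ[ℂ] V be the linear map with η e₀ = ζ • e₀ and η e₁ = ζ² • e₁. For a : Fin n → ZMod 3, let T_a : ⨂[ℂ]_{i : Fin n} V → ⨂[ℂ]_{i : Fin n} V be the induced map on the n-fold tensor power given in the i-th factor by η^{(a i).val} (i.e., T_a = PiTensorProduct.map (fun i => η^{(a i).val})). Then the set {x ∈ ⨂ V : T_a x = x for every a : Fin n → ZMod 3 with ∑ i, a i = 0} is exactly the ℂ-linear span of the two pure tensors ⨂ᵢ e₀ and ⨂ᵢ e₁; in particular it is 2-dimensional. -/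
/-!
The pure tensors `e_f = ⊗ᵢ e_{f i}`, `f : Fin n → Fin 2`, form an eigenbasis for every `T_a`,
with eigenvalue `ζ ^ ∑ᵢ aᵢ w(f i)` for the weights `w 0 = 1`, `w 1 = 2`. Hence the common fixed
vectors are spanned by the `e_f` whose character is trivial on the sum-zero subgroup of `ℤ₃ⁿ`.
A linear form `a ↦ ∑ᵢ aᵢ cᵢ` vanishing on all `a` with `∑ᵢ aᵢ = 0` has constant coefficients
(test it on `eᵢ - eⱼ`), and `w` is injective mod 3, so exactly the two constant `f` survive.
-/

open PiTensorProduct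

lemma Module.End.pow_apply_of_apply_eq_smul {R M : Type*} [CommSemiring R] [AddCommMonoid M]
    [Module R M] {f : Module.End R M} {μ : R} {v : M} (hv : f v = μ • v) (k : ℕ) :
    (f ^ k) v = μ ^ k • v := by
  induction k with
  | zero => simp
  | succ k ih => rw [pow_succ', Module.End.mul_apply, ih, map_smul, hv, smul_smul, pow_succ]

lemma PiTensorProduct.map_tprod_of_apply_eq_smul {ι R : Type*} {M : ι → Type*} [Fintype ι]
    [CommSemiring R] [∀ i, AddCommMonoid (M i)] [∀ i, Module R (M i)]
    {f : ∀ i, Module.End R (M i)} {c : ι → R} {v : ∀ i, M i} (hv : ∀ i, f i (v i) = c i • v i) :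
    map f (tprod R v) = (∏ i, c i) • tprod R v := by
  rw [map_tprod, funext hv, MultilinearMap.map_smul_univ]

lemma Module.Basis.repr_apply_of_apply_eq_smul {ι K V : Type*} [CommSemiring K] [AddCommMonoid V]
    [Module K V] (b : Module.Basis ι K V) {T : Module.End K V} {χ : ι → K}
    (hT : ∀ i, T (b i) = χ i • b i) (x : V) (i : ι) : b.repr (T x) i = χ i * b.repr x i := by
  classical
  suffices (b.coord i).comp T = χ i • b.coord i from LinearMap.congr_fun this x
  refine b.ext fun j => ?_
  by_cases hji : j = i <;> simp [hT, hji]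

theorem Module.Basis.setOf_forall_apply_eq_self_eq_span {ι A K V : Type*} [Field K]
    [AddCommGroup V] [Module K V] (b : Module.Basis ι K V) (T : A → Module.End K V) (χ : A → ι → K)
    (hT : ∀ a i, T a (b i) = χ a i • b i) (p : A → Prop) :
    {x | ∀ a, p a → T a x = x} = Submodule.span K (b '' {i | ∀ a, p a → χ a i = 1}) := by
  ext x
  constructor
  · intro hx
    rw [SetLike.mem_coe, b.mem_span_image]
    intro i hi a ha
    have hrepr := b.repr_apply_of_apply_eq_smul (hT a) x i
    rw [hx a ha] at hrepr
    exact (mul_eq_right₀ (Finsupp.mem_support_iff.mp hi)).mp hrepr.symm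
  · intro hx a ha
    suffices Submodule.span K (b '' {i | ∀ a, p a → χ a i = 1}) ≤ LinearMap.eqLocus (T a) 1 from
      this hx
    rw [Submodule.span_le]
    rintro _ ⟨i, hi, rfl⟩
    simp [hT, hi a ha]

lemma forall_sum_mul_eq_zero_of_sum_eq_zero_iff {ι R : Type*} [Fintype ι] [DecidableEq ι]
    [CommRing R] (c : ι → R) :
    (∀ a : ι → R, ∑ i, a i = 0 → ∑ i, a i * c i = 0) ↔ ∀ i j, c i = c j := by
  constructor
  · intro h i j
    have hij := h (Pi.single i 1 - Pi.single j 1) (by simp)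
    simpa [sub_mul, Finset.sum_sub_distrib, sub_eq_zero, Pi.single_apply, ite_mul] using hij
  · intro h a ha
    obtain _ | ⟨⟨i₀⟩⟩ := isEmpty_or_nonempty ι
    · simp
    · simp [h _ i₀, ← Finset.sum_mul, ha]

lemma IsPrimitiveRoot.prod_pow_pow_val_eq_one_iff {ι M : Type*} [Fintype ι] [CommMonoid M]
    {ζ : M} {k : ℕ} [NeZero k] (hζ : IsPrimitiveRoot ζ k) (w : ι → ℕ) (a : ι → ZMod k) :
    ∏ i, (ζ ^ w i) ^ (a i).val = 1 ↔ ∑ i, a i * w i = 0 := by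
  simp_rw [← pow_mul, Finset.prod_pow_eq_pow_sum, hζ.pow_eq_one_iff_dvd,
    ← ZMod.natCast_eq_zero_iff]
  push_cast [ZMod.natCast_val, ZMod.cast_id]
  simp_rw [mul_comm]

/-- Linear-algebra core of Theorem 3.2 of Cynk–Hulek: the invariants of the `n`-th
tensor power of a 2-dimensional space under the even-sum group `ℤ₃ⁿ⁻¹`, acting through
an endomorphism `η` with eigenvalues `ζ, ζ²` (`ζ` a primitive cube root of unity), are
spanned by the two pure tensors `e₀ ⊗ ⋯ ⊗ e₀` and `e₁ ⊗ ⋯ ⊗ e₁`. -/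
theorem invariants_of_order_three_action (n : ℕ) (hn : 1 ≤ n)
    (ζ : ℂ) (hζ : IsPrimitiveRoot ζ 3)
    (η : Module.End ℂ (Fin 2 → ℂ))
    (he0 : η ![1, 0] = ζ • ![1, 0])
    (he1 : η ![0, 1] = ζ ^ 2 • ![0, 1]) :
    {x : PiTensorProduct ℂ (fun _ : Fin n => Fin 2 → ℂ) |
        ∀ a : Fin n → ZMod 3, ∑ i, a i = 0 →
          PiTensorProduct.map (fun i => η ^ (a i).val) x = x} =
      ↑(Submodule.span ℂ
        {PiTensorProduct.tprod ℂ (fun _ : Fin n => (![1, 0] : Fin 2 → ℂ)),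
         PiTensorProduct.tprod ℂ (fun _ : Fin n => (![0, 1] : Fin 2 → ℂ))}) ∧
    Module.finrank ℂ (Submodule.span ℂ
        {PiTensorProduct.tprod ℂ (fun _ : Fin n => (![1, 0] : Fin 2 → ℂ)),
         PiTensorProduct.tprod ℂ (fun _ : Fin n => (![0, 1] : Fin 2 → ℂ))}) = 2 := by
  set b := Basis.piTensorProduct fun _ : Fin n => Pi.basisFun ℂ (Fin 2)
  have hsingle (j : Fin 2) : (Pi.single j 1 : Fin 2 → ℂ) = ![![1, 0], ![0, 1]] j := by
    ext k
    fin_cases j <;> fin_cases k <;> simp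
  have hη (j : Fin 2) :
      η (Pi.basisFun ℂ (Fin 2) j) = ζ ^ (j.val + 1) • Pi.basisFun ℂ (Fin 2) j := by
    rw [Pi.basisFun_apply, hsingle]
    fin_cases j
    · simpa using he0
    · simpa using he1
  have hb (a : Fin n → ZMod 3) (f : Fin n → Fin 2) :
      map (fun i => η ^ (a i).val) (b f) = (∏ i, (ζ ^ ((f i).val + 1)) ^ (a i).val) • b f := by
    simp only [b, Basis.piTensorProduct_apply]
    exact map_tprod_of_apply_eq_smul fun i => Module.End.pow_apply_of_apply_eq_smul (hη (f i)) _
  have hfixed : {f : Fin n → Fin 2 | ∀ a : Fin n → ZMod 3, ∑ i, a i = 0 →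
      ∏ i, (ζ ^ ((f i).val + 1)) ^ (a i).val = 1} = Set.range (Function.const (Fin n)) := by
    have hweight : ∀ x y : Fin 2, ((x.val + 1 : ℕ) : ZMod 3) = (y.val + 1 : ℕ) ↔ x = y := by
      decide
    ext f
    simp only [Set.mem_ofPred_eq, hζ.prod_pow_pow_val_eq_one_iff fun i => (f i).val + 1,
      forall_sum_mul_eq_zero_of_sum_eq_zero_iff, hweight, Set.range_const_eq_diagonal]
  have hpair : {tprod ℂ (fun _ : Fin n => (![1, 0] : Fin 2 → ℂ)),
      tprod ℂ (fun _ : Fin n => (![0, 1] : Fin 2 → ℂ))} =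
        Set.range (b ∘ Function.const (Fin n)) := by
    ext x
    simp [b, hsingle, Fin.exists_fin_two, eq_comm, Function.const]
  have : Nonempty (Fin n) := ⟨⟨0, hn⟩⟩
  rw [hpair, Set.range_comp, ← hfixed]
  refine ⟨b.setOf_forall_apply_eq_self_eq_span _ _ hb _, ?_⟩
  rw [hfixed, ← Set.range_comp, finrank_span_eq_card, Fintype.card_fin]
  exact b.linearIndependent.comp _ Function.const_injective
end

section
/- Let n ≥ 1, let V = (Fin 2 → ℂ) with standard basis vectors e₀, e₁, and let η : V →ₗ[ℂ] V be the linear map with η e₀ = Complex.I • e₀ and η e₁ = (−Complex.I) • e₁. For a : Fin n → ZMod 4, let T_a : ⨂[ℂ]_{i : Fin n} V → ⨂[ℂ]_{i : Fin n} V be the induced map on the n-fold tensor power given in the i-th factor by η^{(a i).val} (i.e., T_a = PiTensorProduct.map (fun i => η^{(a i).val})). Then the set {x ∈ ⨂ V : T_a x = x for every a : Fin n → ZMod 4 with ∑ i, a i = 0} is exactly the ℂ-linear span of the two pure tensors ⨂ᵢ e₀ and ⨂ᵢ e₁; in particular it is 2-dimensional. -/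
open PiTensorProduct

/-- The standard basis vectors of `Fin 2 → ℂ`. -/
noncomputable def CH42.ee (s : Fin 2) : Fin 2 → ℂ := Pi.single s 1

/-- The eigenvalues of `η`. -/
noncomputable def CH42.ev : Fin 2 → ℂ := ![Complex.I, -Complex.I]

namespace CH42

lemma ee_zero : ee 0 = ![1, 0] := by
  funext t; fin_cases t <;> simp [ee]

lemma ee_one : ee 1 = ![0, 1] := by
  funext t; fin_cases t <;> simp [ee]

lemma eta_apply (η : Module.End ℂ (Fin 2 → ℂ))
    (he0 : η ![1, 0] = Complex.I • ![1, 0])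
    (he1 : η ![0, 1] = (-Complex.I) • ![0, 1])
    (w : Fin 2 → ℂ) (t : Fin 2) : η w t = ev t * w t := by
  have hw : w = w 0 • ![1, 0] + w 1 • ![0, 1] := by
    funext u; fin_cases u <;> simp
  rw [hw, map_add, map_smul, map_smul, he0, he1]
  fin_cases t <;> simp [ev] <;> ring

lemma eta_pow_apply (η : Module.End ℂ (Fin 2 → ℂ))
    (he0 : η ![1, 0] = Complex.I • ![1, 0])
    (he1 : η ![0, 1] = (-Complex.I) • ![0, 1])
    (k : ℕ) (w : Fin 2 → ℂ) (t : Fin 2) : (η ^ k) w t = ev t ^ k * w t := by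
  induction k generalizing w with
  | zero => simp
  | succ k ih =>
    rw [pow_succ, Module.End.mul_apply, ih (η w), eta_apply η he0 he1, pow_succ]
    ring

lemma ev_pow_four (s : Fin 2) : ev s ^ 4 = 1 := by
  fin_cases s
  · simp [ev, Complex.I_pow_four]
  · show (-Complex.I) ^ 4 = 1
    rw [Even.neg_pow (by decide : Even 4)]
    exact Complex.I_pow_four

end CH42

open CH42 in
/-- Linear-algebra core of Theorem 4.2 of Cynk–Hulek: the invariants of the `n`-th
tensor power of a 2-dimensional space under the even-sum group `ℤ₄ⁿ⁻¹`, acting through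
an endomorphism `η` with eigenvalues `i, -i`, are spanned by the two pure tensors
`e₀ ⊗ ⋯ ⊗ e₀` and `e₁ ⊗ ⋯ ⊗ e₁`. -/
theorem invariants_of_order_four_action (n : ℕ) (hn : 1 ≤ n)
    (η : Module.End ℂ (Fin 2 → ℂ))
    (he0 : η ![1, 0] = Complex.I • ![1, 0])
    (he1 : η ![0, 1] = (-Complex.I) • ![0, 1]) :
    {x : PiTensorProduct ℂ (fun _ : Fin n => Fin 2 → ℂ) |
        ∀ a : Fin n → ZMod 4, ∑ i, a i = 0 →
          PiTensorProduct.map (fun i => η ^ (a i).val) x = x} =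
      ↑(Submodule.span ℂ
        {PiTensorProduct.tprod ℂ (fun _ : Fin n => (![1, 0] : Fin 2 → ℂ)),
         PiTensorProduct.tprod ℂ (fun _ : Fin n => (![0, 1] : Fin 2 → ℂ))}) ∧
    Module.finrank ℂ (Submodule.span ℂ
        {PiTensorProduct.tprod ℂ (fun _ : Fin n => (![1, 0] : Fin 2 → ℂ)),
         PiTensorProduct.tprod ℂ (fun _ : Fin n => (![0, 1] : Fin 2 → ℂ))}) = 2 := by
  classical
  set g0 : Fin n → Fin 2 := fun _ => 0 with hg0def
  set g1 : Fin n → Fin 2 := fun _ => 1 with hg1def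
  set t0 : PiTensorProduct ℂ (fun _ : Fin n => Fin 2 → ℂ) :=
    PiTensorProduct.tprod ℂ (fun _ : Fin n => (![1, 0] : Fin 2 → ℂ)) with ht0def
  set t1 : PiTensorProduct ℂ (fun _ : Fin n => Fin 2 → ℂ) :=
    PiTensorProduct.tprod ℂ (fun _ : Fin n => (![0, 1] : Fin 2 → ℂ)) with ht1def
  let bT : (Fin n → Fin 2) → PiTensorProduct ℂ (fun _ : Fin n => Fin 2 → ℂ) :=
    fun g => PiTensorProduct.tprod ℂ (fun i => ee (g i))
  let M : MultilinearMap ℂ (fun _ : Fin n => Fin 2 → ℂ) ((Fin n → Fin 2) → ℂ) :=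
    MultilinearMap.pi (fun g =>
      (MultilinearMap.mkPiAlgebra ℂ (Fin n) ℂ).compLinearMap (fun i => LinearMap.proj (g i)))
  let Φ : PiTensorProduct ℂ (fun _ : Fin n => Fin 2 → ℂ) →ₗ[ℂ] ((Fin n → Fin 2) → ℂ) :=
    PiTensorProduct.lift M
  have hΦ : ∀ (v : Fin n → (Fin 2 → ℂ)) (g : Fin n → Fin 2),
      Φ (tprod ℂ v) g = ∏ i, v i (g i) := by
    intro v g
    simp [Φ, M]
  have hee : ∀ w : Fin 2 → ℂ, ∑ s, w s • ee s = w := by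
    intro w; funext t
    simp [ee, Pi.single_apply, Finset.sum_apply, mul_ite]
  have h1 : ∀ v : Fin n → (Fin 2 → ℂ),
      tprod ℂ v = ∑ g : Fin n → Fin 2, (∏ i, v i (g i)) • bT g := by
    intro v
    conv_lhs => rw [show v = fun i => ∑ s, v i s • ee s from funext fun i => (hee (v i)).symm]
    rw [MultilinearMap.map_sum (PiTensorProduct.tprod ℂ)]
    refine Finset.sum_congr rfl fun g _ => ?_
    exact MultilinearMap.map_smul_univ (PiTensorProduct.tprod ℂ) (fun i => v i (g i)) (fun i => ee (g i))
  have hexp : ∀ x : PiTensorProduct ℂ (fun _ : Fin n => Fin 2 → ℂ),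
      x = ∑ g : Fin n → Fin 2, Φ x g • bT g := by
    intro x
    induction x using PiTensorProduct.induction_on with
    | smul_tprod r v =>
      rw [map_smul]
      simp_rw [Pi.smul_apply, smul_eq_mul, hΦ, mul_smul, ← Finset.smul_sum]
      rw [← h1 v]
    | add x y hx hy =>
      rw [map_add]
      simp_rw [Pi.add_apply, add_smul, Finset.sum_add_distrib]
      rw [← hx, ← hy]
  have hcomm : ∀ (a : Fin n → ZMod 4) (x : PiTensorProduct ℂ (fun _ : Fin n => Fin 2 → ℂ))
      (g : Fin n → Fin 2),
      Φ (PiTensorProduct.map (fun i => η ^ (a i).val) x) g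
        = (∏ i, ev (g i) ^ (a i).val) * Φ x g := by
    intro a x g
    induction x using PiTensorProduct.induction_on with
    | smul_tprod r v =>
      simp only [map_smul, PiTensorProduct.map_tprod, Pi.smul_apply, smul_eq_mul, hΦ]
      have h2 : ∀ i, (η ^ (a i).val) (v i) (g i) = ev (g i) ^ (a i).val * v i (g i) :=
        fun i => eta_pow_apply η he0 he1 _ _ _
      simp_rw [h2]
      rw [Finset.prod_mul_distrib]
      ring
    | add x y hx hy =>
      simp only [map_add, Pi.add_apply, hx, hy]
      ring
  have hgen : ∀ (s : Fin 2) (a : Fin n → ZMod 4),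
      PiTensorProduct.map (fun i => η ^ (a i).val) (PiTensorProduct.tprod ℂ (fun _ : Fin n => ee s))
        = (∏ i : Fin n, ev s ^ (a i).val) • PiTensorProduct.tprod ℂ (fun _ : Fin n => ee s) := by
    intro s a
    rw [PiTensorProduct.map_tprod]
    have h3 : ∀ k : ℕ, (η ^ k) (ee s) = (ev s ^ k) • ee s := by
      intro k; funext t
      rw [eta_pow_apply η he0 he1]
      by_cases h : t = s
      · subst h; simp
      · simp [ee, Pi.single_eq_of_ne h]
    simp_rw [h3]
    exact MultilinearMap.map_smul_univ (PiTensorProduct.tprod ℂ) _ _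
  have heig1 : ∀ (s : Fin 2) (a : Fin n → ZMod 4), ∑ i, a i = 0 →
      (∏ i : Fin n, ev s ^ (a i).val) = 1 := by
    intro s a ha
    rw [Finset.prod_pow_eq_pow_sum]
    obtain ⟨m, hm⟩ : (4 : ℕ) ∣ ∑ i, (a i).val := by
      rw [← ZMod.natCast_eq_zero_iff]
      push_cast
      simp only [ZMod.natCast_val, ZMod.cast_id]
      exact ha
    rw [hm, pow_mul, ev_pow_four, one_pow]
  have hne : g0 ≠ g1 := by
    intro h
    have := congrFun h ⟨0, hn⟩
    simp [hg0def, hg1def] at this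
  have hb0 : bT g0 = t0 := by
    simp only [bT, hg0def, ee_zero, ht0def]
  have hb1 : bT g1 = t1 := by
    simp only [bT, hg1def, ee_one, ht1def]
  constructor
  · ext x
    simp only [Set.mem_setOf_eq, SetLike.mem_coe]
    constructor
    · intro hx
      have hzero : ∀ g : Fin n → Fin 2, g ≠ g0 → g ≠ g1 → Φ x g = 0 := by
        intro g hne0 hne1
        obtain ⟨i, hi⟩ := Function.ne_iff.mp hne0
        obtain ⟨j, hj⟩ := Function.ne_iff.mp hne1
        have hfin : ∀ s : Fin 2, s ≠ 0 → s = 1 := by decide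
        have hfin' : ∀ s : Fin 2, s ≠ 1 → s = 0 := by decide
        have hi1 : g i = 1 := hfin _ hi
        have hj0 : g j = 0 := hfin' _ hj
        have hij : i ≠ j := by
          rintro rfl
          rw [hi1] at hj0
          exact absurd hj0 (by decide)
        set a : Fin n → ZMod 4 := Pi.single i 1 + Pi.single j 3 with hadef
        have hai : a i = 1 := by
          simp [hadef, Pi.single_apply, hij]
        have haj : a j = 3 := by
          simp [hadef, Pi.single_apply, hij.symm]
        have hout : ∀ k, k ≠ i → k ≠ j → a k = 0 := by
          intro k hki hkj
          simp [hadef, Pi.single_apply, hki, hkj]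
        have hsum : ∑ k, a k = 0 := by
          simp only [hadef, Pi.add_apply, Finset.sum_add_distrib,
            Finset.sum_pi_single', Finset.mem_univ, if_true]
          decide
        have hprod : (∏ k, ev (g k) ^ (a k).val) = -1 := by
          rw [← Finset.prod_subset (Finset.subset_univ ({i, j} : Finset (Fin n)))
            (fun k _ hk => ?_)]
          · rw [Finset.prod_pair hij, hai, haj, hi1, hj0]
            show ev 1 ^ (1 : ZMod 4).val * ev 0 ^ (3 : ZMod 4).val = -1
            have hv1 : (1 : ZMod 4).val = 1 := rfl
            have hv3 : (3 : ZMod 4).val = 3 := rfl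
            rw [hv1, hv3]
            simp only [ev, Matrix.cons_val_one, Matrix.head_cons, Matrix.cons_val_zero]
            have h4 : (-Complex.I) ^ 1 * Complex.I ^ 3 = -(Complex.I ^ 4) := by ring
            rw [h4, Complex.I_pow_four]
          · simp only [Finset.mem_insert, Finset.mem_singleton, not_or] at hk
            rw [hout k hk.1 hk.2]
            simp [ZMod.val_zero]
        have hkey := hcomm a x g
        rw [hx a hsum, hprod] at hkey
        linear_combination hkey / 2
      rw [hexp x]
      have hsub : ∑ g : Fin n → Fin 2, Φ x g • bT g
          = ∑ g ∈ ({g0, g1} : Finset (Fin n → Fin 2)), Φ x g • bT g := by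
        refine (Finset.sum_subset (Finset.subset_univ _) ?_).symm
        intro g _ hg
        simp only [Finset.mem_insert, Finset.mem_singleton, not_or] at hg
        rw [hzero g hg.1 hg.2, zero_smul]
      rw [hsub, Finset.sum_pair hne, hb0, hb1]
      exact Submodule.add_mem _
        (Submodule.smul_mem _ _ (Submodule.subset_span (Set.mem_insert _ _)))
        (Submodule.smul_mem _ _ (Submodule.subset_span (Set.mem_insert_of_mem _ rfl)))
    · intro hx a ha
      refine Submodule.span_induction ?_ ?_ ?_ ?_ hx
      · intro y hy
        simp only [Set.mem_insert_iff, Set.mem_singleton_iff] at hy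
        rcases hy with rfl | rfl
        · rw [ht0def, ← ee_zero, hgen 0 a, heig1 0 a ha, one_smul]
        · rw [ht1def, ← ee_one, hgen 1 a, heig1 1 a ha, one_smul]
      · simp
      · intro u v _ _ hu hv; rw [map_add, hu, hv]
      · intro c u _ hu; rw [map_smul, hu]
  · haveI : Nonempty (Fin n) := ⟨⟨0, hn⟩⟩
    have hΦ00 : Φ t0 g0 = 1 := by
      rw [ht0def, hΦ]
      simp [hg0def]
    have hΦ10 : Φ t1 g0 = 0 := by
      rw [ht1def, hΦ]
      simp [hg0def]
      omega
    have hΦ01 : Φ t0 g1 = 0 := by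
      rw [ht0def, hΦ]
      simp [hg1def]
      omega
    have hΦ11 : Φ t1 g1 = 1 := by
      rw [ht1def, hΦ]
      simp [hg1def]
    have hli : LinearIndependent ℂ ![t0, t1] := by
      rw [LinearIndependent.pair_iff]
      intro s t hst
      have h0 := congrFun (congrArg Φ hst) g0
      have h1' := congrFun (congrArg Φ hst) g1
      simp only [map_add, map_smul, Pi.add_apply, Pi.smul_apply, smul_eq_mul, map_zero,
        Pi.zero_apply, hΦ00, hΦ10, hΦ01, hΦ11, mul_one, mul_zero, add_zero, zero_add] at h0 h1'
      exact ⟨h0, h1'⟩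
    have hset : ({t0, t1} : Set (PiTensorProduct ℂ (fun _ : Fin n => Fin 2 → ℂ)))
        = Set.range ![t0, t1] := by
      ext z
      simp only [Set.mem_insert_iff, Set.mem_singleton_iff, Set.mem_range,
        Fin.exists_fin_two, Matrix.cons_val_zero, Matrix.cons_val_one, Matrix.head_cons]
      tauto
    rw [hset, finrank_span_eq_card hli, Fintype.card_fin]
end

section
/- Consider the twelve linear forms on ℚ⁶ with coordinates (x, y, z, t, u, v): x, x−u, x−v, y, y−u, y−v, z, z−u, z−v, t, t−u, t−v. The set of points P of the projective space ℙ⁵(ℚ) (the projectivization of Fin 6 → ℚ over ℚ) at which exactly 9 of these twelve forms vanish has exactly 4 elements, namely the coordinate points [1:0:0:0:0:0], [0:1:0:0:0:0], [0:0:1:0:0:0], [0:0:0:1:0:0]. -/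
/-! The twelve forms fall into the four blocks `a, a - u, a - v` with `a ∈ {x, y, z, t}`. At most
three forms of a block vanish, and all three only when `a = u = v = 0`. Nine vanishing forms
therefore force a whole block to vanish, so `u = v = 0`; then each block contributes `3` or `0`
according as `a = 0` or not, so exactly one of `x, y, z, t` is nonzero. -/

/-- The `i`-th coordinate function on `ℚ⁶` as a linear form. -/
noncomputable def coordForm (i : Fin 6) : (Fin 6 → ℚ) →ₗ[ℚ] ℚ :=
  LinearMap.proj i

/-- The twelve linear forms cutting out the branch divisor of Ahlgren's fivefold:
`x, x−u, x−v, y, y−u, y−v, z, z−u, z−v, t, t−u, t−v` on `ℚ⁶` with coordinates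
`(x, y, z, t, u, v)`. -/
noncomputable def ahlgrenForms : Fin 12 → ((Fin 6 → ℚ) →ₗ[ℚ] ℚ) :=
  ![coordForm 0, coordForm 0 - coordForm 4, coordForm 0 - coordForm 5,
    coordForm 1, coordForm 1 - coordForm 4, coordForm 1 - coordForm 5,
    coordForm 2, coordForm 2 - coordForm 4, coordForm 2 - coordForm 5,
    coordForm 3, coordForm 3 - coordForm 4, coordForm 3 - coordForm 5]

open Finset Projectivization
open scoped LinearAlgebra.Projectivization

section Vanishing

variable {K V ι : Type*} [DivisionRing K] [DecidableEq K] [AddCommGroup V] [Module K V]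
  [Fintype ι]

def numVanishing (f : ι → V →ₗ[K] K) (v : V) : ℕ := #{k | f k v = 0}

lemma numVanishing_smul (f : ι → V →ₗ[K] K) {c : K} (hc : c ≠ 0) (v : V) :
    numVanishing f (c • v) = numVanishing f v := by
  simp [numVanishing, hc]

lemma numVanishing_rep_mk (f : ι → V →ₗ[K] K) (v : V) (hv : v ≠ 0) :
    numVanishing f (mk K v hv).rep = numVanishing f v := by
  obtain ⟨a, ha⟩ := exists_smul_eq_mk_rep K v hv
  rw [← ha, Units.smul_def, numVanishing_smul f a.ne_zero]

end Vanishing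

section CoordinatePoints

variable (K : Type*) {ι : Type*} [DivisionRing K] [DecidableEq ι]

def coordPoint (i : ι) : ℙ K (ι → K) :=
  mk K (Pi.single i 1) (by simp)

variable {K}

lemma mk_eq_coordPoint {w : ι → K} (hw : w ≠ 0) {i : ι} (h : ∀ j ≠ i, w j = 0) :
    mk K w hw = coordPoint K i := by
  rw [coordPoint, mk_eq_mk_iff']
  refine ⟨w i, funext fun j => ?_⟩
  rcases eq_or_ne j i with rfl | hj
  · simp
  · simp [hj, h j hj]

lemma coordPoint_injective : Function.Injective (coordPoint K : ι → ℙ K (ι → K)) := by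
  intro i j hij
  obtain ⟨a, ha⟩ := (mk_eq_mk_iff' K _ _ _ _).1 hij
  by_contra hne
  simpa [Pi.single_apply, hne] using congrFun ha i

end CoordinatePoints

section Blocks

variable {R : Type*} [Zero R] [DecidableEq R]

def blockCount (a u v : R) : ℕ :=
  (if a = 0 then 1 else 0) + (if a = u then 1 else 0) + (if a = v then 1 else 0)

lemma blockCount_le_three (a u v : R) : blockCount a u v ≤ 3 := by
  unfold blockCount; split_ifs <;> omega

lemma blockCount_eq_three_iff {a u v : R} : blockCount a u v = 3 ↔ a = 0 ∧ u = 0 ∧ v = 0 := by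
  constructor
  · unfold blockCount
    split_ifs with ha hu hv <;> first | omega | exact fun _ => ⟨ha, hu ▸ ha, hv ▸ ha⟩
  · rintro ⟨rfl, rfl, rfl⟩
    simp [blockCount]

lemma blockCount_zero_zero (a : R) : blockCount a 0 0 = if a = 0 then 3 else 0 := by
  by_cases ha : a = 0 <;> simp [blockCount, ha]

end Blocks

lemma numVanishing_ahlgrenForms (w : Fin 6 → ℚ) :
    numVanishing ahlgrenForms w = blockCount (w 0) (w 4) (w 5) + blockCount (w 1) (w 4) (w 5)
      + blockCount (w 2) (w 4) (w 5) + blockCount (w 3) (w 4) (w 5) := by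
  rw [numVanishing, card_filter]
  simp only [Fin.sum_univ_succ, Fin.sum_univ_zero, ahlgrenForms, coordForm, blockCount,
    Matrix.cons_val_zero, Matrix.cons_val_succ, LinearMap.sub_apply, LinearMap.proj_apply,
    sub_eq_zero]
  ac_rfl

lemma numVanishing_ahlgrenForms_single {i : Fin 6} (hi : i ∈ ({0, 1, 2, 3} : Set (Fin 6))) :
    numVanishing ahlgrenForms (Pi.single i 1) = 9 := by
  fin_cases i <;> simp_all [numVanishing_ahlgrenForms, blockCount]

lemma exists_of_numVanishing_ahlgrenForms_eq_nine {w : Fin 6 → ℚ}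
    (h : numVanishing ahlgrenForms w = 9) :
    ∃ i ∈ ({0, 1, 2, 3} : Set (Fin 6)), ∀ j ≠ i, w j = 0 := by
  rw [numVanishing_ahlgrenForms] at h
  have hu : w 4 = 0 ∧ w 5 = 0 := by
    have := blockCount_le_three (w 0) (w 4) (w 5)
    have := blockCount_le_three (w 1) (w 4) (w 5)
    have := blockCount_le_three (w 2) (w 4) (w 5)
    have := blockCount_le_three (w 3) (w 4) (w 5)
    obtain h3 | h3 | h3 | h3 : blockCount (w 0) (w 4) (w 5) = 3 ∨
        blockCount (w 1) (w 4) (w 5) = 3 ∨ blockCount (w 2) (w 4) (w 5) = 3 ∨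
        blockCount (w 3) (w 4) (w 5) = 3 := by omega
    all_goals exact (blockCount_eq_three_iff.1 h3).2
  simp only [hu.1, hu.2, blockCount_zero_zero] at h
  split_ifs at h with h0 h1 h2 h3 <;> try omega
  exacts [⟨3, by simp, fun j hj => by fin_cases j <;> simp_all⟩,
    ⟨2, by simp, fun j hj => by fin_cases j <;> simp_all⟩,
    ⟨1, by simp, fun j hj => by fin_cases j <;> simp_all⟩,
    ⟨0, by simp, fun j hj => by fin_cases j <;> simp_all⟩]

lemma setOf_numVanishing_ahlgrenForms_rep_eq_nine :
    {P : ℙ ℚ (Fin 6 → ℚ) | numVanishing ahlgrenForms P.rep = 9} =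
      coordPoint ℚ '' {0, 1, 2, 3} := by
  ext P
  constructor
  · intro h
    obtain ⟨i, hi, hP⟩ := exists_of_numVanishing_ahlgrenForms_eq_nine h
    exact ⟨i, hi, (mk_eq_coordPoint P.rep_nonzero hP).symm.trans (mk_rep P)⟩
  · rintro ⟨i, hi, rfl⟩
    show numVanishing ahlgrenForms (coordPoint ℚ i).rep = 9
    rw [coordPoint, numVanishing_rep_mk]
    exact numVanishing_ahlgrenForms_single hi

/-- Entry `T₁₁` of Table 1 of Cynk–Hulek: the points of `ℙ⁵(ℚ)` at which exactly 9 of the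
twelve forms vanish are precisely the four coordinate points
`[1:0:0:0:0:0], [0:1:0:0:0:0], [0:0:1:0:0:0], [0:0:0:1:0:0]`. -/
theorem ahlgren_mult_nine_points :
    {P : Projectivization ℚ (Fin 6 → ℚ) |
        (Finset.univ.filter fun k : Fin 12 => ahlgrenForms k P.rep = 0).card = 9} =
      {Projectivization.mk ℚ (Pi.single 0 1)
          (by intro h; simpa using congrFun h 0),
       Projectivization.mk ℚ (Pi.single 1 1)
          (by intro h; simpa using congrFun h 1),
       Projectivization.mk ℚ (Pi.single 2 1)
          (by intro h; simpa using congrFun h 2),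
       Projectivization.mk ℚ (Pi.single 3 1)
          (by intro h; simpa using congrFun h 3)} ∧
    {P : Projectivization ℚ (Fin 6 → ℚ) |
        (Finset.univ.filter fun k : Fin 12 => ahlgrenForms k P.rep = 0).card = 9}.ncard = 4 := by
  have hS := setOf_numVanishing_ahlgrenForms_rep_eq_nine
  have hcard : (coordPoint ℚ '' {0, 1, 2, 3} : Set (ℙ ℚ (Fin 6 → ℚ))).ncard = 4 := by
    rw [Set.ncard_image_of_injective _ coordPoint_injective]
    simp
  rw [← hS] at hcard
  simp only [Set.image_insert_eq, Set.image_singleton] at hS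
  exact ⟨hS, hcard⟩
end
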